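/- Let R be a commutative ring, S a multiplicative subset of R, and f : M → N a u-S-isomorphism of R-modules. Then there exists an R-homomorphism g : N → M and an element t ∈ S such that f ∘ g = t·Id_N and g ∘ f = t·Id_M (in particular g is also a u-S-isomorphism). -/

import Mathlib

/-!
If `s` kills `ker f` and `t • N ⊆ range f`, then `g := s ∘ (range f ≃ M ⧸ ker f)⁻¹ ∘ t` is a
well-defined linear map `N → M`: multiplication by `t` lands in `range f`, and multiplication
by `s` factors through `M ⧸ ker f`. Both composites `f ∘ g` and `g ∘ f` are multiplication by
`s * t`, and these two identities already make `g` a `u`-`S`-isomorphism.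
-/

namespace LinearMap

variable {R M N : Type*} [CommRing R] [AddCommGroup M] [Module R M] [AddCommGroup N] [Module R N]
  (f : M →ₗ[R] N) {s t : R} (hs : ∀ x ∈ ker f, s • x = 0) (ht : ∀ y, t • y ∈ range f)

noncomputable def quasiInverse : N →ₗ[R] M :=
  (ker f).liftQ (s • LinearMap.id) (fun x hx => by simpa using hs x hx) ∘ₗ
    f.quotKerEquivRange.symm.toLinearMap ∘ₗ (t • LinearMap.id).codRestrict (range f) ht

theorem quasiInverse_apply_of_apply_eq {x : M} {y : N} (h : f x = t • y) :
    f.quasiInverse hs ht y = s • x := by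
  have hy : (t • LinearMap.id).codRestrict (range f) ht y =
      f.quotKerEquivRange (Submodule.Quotient.mk x) :=
    Subtype.ext (by simpa using h.symm)
  simp only [quasiInverse, coe_comp, LinearEquiv.coe_coe, Function.comp_apply]
  rw [hy, LinearEquiv.symm_apply_apply, Submodule.liftQ_apply, smul_apply, id_apply]

theorem apply_quasiInverse (y : N) : f (f.quasiInverse hs ht y) = (s * t) • y := by
  obtain ⟨x, hx⟩ := ht y
  rw [f.quasiInverse_apply_of_apply_eq hs ht hx, map_smul, hx, mul_smul]

theorem quasiInverse_apply (x : M) : f.quasiInverse hs ht (f x) = (s * t) • x := by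
  rw [f.quasiInverse_apply_of_apply_eq hs ht (f.map_smul t x), mul_smul]

end LinearMap

universe u

theorem uS_isomorphism_has_quasi_inverse
    {R : Type u} [CommRing R] (S : Submonoid R)
    {M N : Type u} [AddCommGroup M] [Module R M] [AddCommGroup N] [Module R N]
    (f : M →ₗ[R] N)
    (hker : ∃ s ∈ S, ∀ x ∈ LinearMap.ker f, s • x = 0)
    (hcoker : ∃ s ∈ S, ∀ y : N, s • y ∈ LinearMap.range f) :
    ∃ (g : N →ₗ[R] M), ∃ t ∈ S,
      (∀ y : N, f (g y) = t • y) ∧ (∀ x : M, g (f x) = t • x) ∧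
      (∃ s ∈ S, ∀ y ∈ LinearMap.ker g, s • y = 0) ∧
      (∃ s ∈ S, ∀ x : M, s • x ∈ LinearMap.range g) := by
  obtain ⟨s, hsS, hs⟩ := hker
  obtain ⟨t, htS, ht⟩ := hcoker
  have hst : s * t ∈ S := S.mul_mem hsS htS
  refine ⟨f.quasiInverse hs ht, s * t, hst, f.apply_quasiInverse hs ht,
    f.quasiInverse_apply hs ht, ⟨s * t, hst, fun y hy => ?_⟩,
    ⟨s * t, hst, fun x => ⟨f x, f.quasiInverse_apply hs ht x⟩⟩⟩
  rw [← f.apply_quasiInverse hs ht y, hy, map_zero]
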